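/- Let ι be a nonempty finite index set and 0 ≤ ε < 1. For each s ∈ ι, let u_s, v_s, w_s ∈ ℝ³ be affinely independent unit vectors with u_s · (v_s × w_s) > 0, and suppose the distance from each of u_s, v_s, w_s to the orthogonal projection of the origin onto the affine span of {u_s, v_s, w_s} is at most ε. Let m : ι → ℝ with m_s > 0, and suppose there is a constant c > 0 with ‖(v_s − u_s) × (w_s − u_s)‖/2 = c · m_s for all s (the map is area-preserving). Define a_s = ‖(v_s − u_s) × (w_s − u_s)‖/2, A = Σ_s a_s, V = Σ_s u_s · (v_s × w_s)/6, M = Σ_s m_s, and E = Σ_s a_s²/m_s. Then 0 ≤ M·E/(3V) − 3V ≤ (1 + A/(3V)) · A · (1 − √(1 − ε²)). -/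

import Mathlib

open scoped RealInnerProductSpace

noncomputable def cross3 (x y : EuclideanSpace ℝ (Fin 3)) : EuclideanSpace ℝ (Fin 3) :=
  WithLp.toLp 2 (crossProduct x y)

/-!
Each face `[u, v, w]` spans with the origin a tetrahedron of volume `‖P‖ · a / 3`, where the foot
`P` of the perpendicular from the origin is parallel to the normal `n = (v - u) × (w - u)`. By
Pythagoras `‖P‖² = 1 - dist u P² ≥ 1 - ε²`, and by Cauchy–Schwarz `u · n ≤ ‖n‖`, so
`√(1 - ε²) · A ≤ 3V ≤ A`. Area preservation is the equality case of Cauchy–Schwarz, `M · E = A²`,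
and then `A² / (3V) - 3V = (A - 3V) (1 + A / (3V))` gives both bounds.
-/

open Finset

lemma EuclideanSpace.real_inner_eq_dotProduct {ι : Type*} [Fintype ι]
    (x y : EuclideanSpace ℝ ι) : ⟪x, y⟫ = x.ofLp ⬝ᵥ y.ofLp := by
  simp [EuclideanSpace.inner_eq_star_dotProduct, dotProduct_comm]

section CrossProduct

open EuclideanSpace

variable (x y z : EuclideanSpace ℝ (Fin 3))

lemma cross3_cross3 : cross3 x (cross3 y z) = ⟪x, z⟫ • y - ⟪x, y⟫ • z := by
  ext i
  simp [cross3, cross_cross_eq_smul_sub_smul', real_inner_eq_dotProduct, dotProduct_comm y.ofLp]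

lemma cross3_zero : cross3 x 0 = 0 := by
  simp [cross3]

lemma inner_cross3_sub_sub : ⟪x, cross3 (y - x) (z - x)⟫ = ⟪x, cross3 y z⟫ := by
  simp [cross3, real_inner_eq_dotProduct, map_sub, LinearMap.sub_apply, dotProduct_sub,
    dot_self_cross, dot_cross_self]

lemma norm_sq_smul_eq_inner_smul_of_cross3_eq_zero {x y : EuclideanSpace ℝ (Fin 3)}
    (h : cross3 x y = 0) : ‖x‖ ^ 2 • y = ⟪x, y⟫ • x := by
  have := cross3_cross3 x x y
  rw [h, cross3_zero, real_inner_self_eq_norm_sq] at this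
  exact (sub_eq_zero.mp this.symm).symm

end CrossProduct

lemma sqrt_one_sub_sq_le_norm_of_inner_sub_eq_zero {F : Type*} [NormedAddCommGroup F]
    [InnerProductSpace ℝ F] {ε : ℝ} {u P : F} (hu : ‖u‖ = 1) (hPu : ⟪P, u - P⟫ = 0)
    (hdist : dist u P ≤ ε) : Real.sqrt (1 - ε ^ 2) ≤ ‖P‖ := by
  have hpyth : ‖u‖ ^ 2 = ‖P‖ ^ 2 + dist u P ^ 2 := by
    simpa [sq, dist_eq_norm] using norm_add_sq_eq_norm_sq_add_norm_sq_real hPu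
  have hsq : 1 - ε ^ 2 ≤ ‖P‖ ^ 2 := by
    nlinarith [dist_nonneg (x := u) (y := P)]
  simpa using Real.sqrt_le_sqrt hsq

lemma inner_cross3_le_norm_cross3_sub_sub {u : EuclideanSpace ℝ (Fin 3)} (hu : ‖u‖ = 1)
    (v w : EuclideanSpace ℝ (Fin 3)) :
    ⟪u, cross3 v w⟫ ≤ ‖cross3 (v - u) (w - u)‖ := by
  simpa [inner_cross3_sub_sub, hu] using real_inner_le_norm u (cross3 (v - u) (w - u))

lemma inner_cross3_eq_norm_mul_norm_cross3_sub_sub {u v w P : EuclideanSpace ℝ (Fin 3)}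
    (hP : P ≠ 0) (hPu : ⟪P, u - P⟫ = 0) (hPv : ⟪P, v - P⟫ = 0) (hPw : ⟪P, w - P⟫ = 0)
    (horient : 0 ≤ ⟪u, cross3 v w⟫) :
    ⟪u, cross3 v w⟫ = ‖P‖ * ‖cross3 (v - u) (w - u)‖ := by
  set n := cross3 (v - u) (w - u)
  have hPedge : ∀ {x}, ⟪P, x - P⟫ = 0 → ⟪P, x - u⟫ = 0 := fun hPx => by
    rw [← sub_sub_sub_cancel_right _ u P, inner_sub_right, hPx, hPu, sub_zero]
  have hP2 : ‖P‖ ^ 2 ≠ 0 := by positivity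
  have hpar : ‖P‖ ^ 2 • n = ⟪P, n⟫ • P := by
    apply norm_sq_smul_eq_inner_smul_of_cross3_eq_zero
    simp [n, cross3_cross3, hPedge hPv, hPedge hPw]
  have hPu' : ⟪u, P⟫ = ‖P‖ ^ 2 := by
    rwa [inner_sub_right, real_inner_self_eq_norm_sq, sub_eq_zero, real_inner_comm] at hPu
  have hun : ⟪u, n⟫ = ⟪P, n⟫ := by
    have := congrArg (⟪u, ·⟫) hpar
    simp only [real_inner_smul_right, hPu'] at this
    exact mul_left_cancel₀ hP2 (this.trans (mul_comm _ _))
  have hnorm : ‖P‖ * ‖n‖ = |⟪P, n⟫| := by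
    have := congrArg norm hpar
    rw [norm_smul, norm_smul, norm_pow, norm_norm, Real.norm_eq_abs, pow_two, mul_assoc] at this
    exact mul_left_cancel₀ (norm_ne_zero_iff.mpr hP) (this.trans (mul_comm _ _))
  rw [← inner_cross3_sub_sub, hun, hnorm, abs_of_nonneg]
  rwa [← hun, inner_cross3_sub_sub]

lemma sqrt_one_sub_sq_mul_norm_cross3_le_inner_cross3 {ε : ℝ} (hε1 : ε < 1)
    {u v w P : EuclideanSpace ℝ (Fin 3)} (hu : ‖u‖ = 1)
    (hPu : ⟪P, u - P⟫ = 0) (hPv : ⟪P, v - P⟫ = 0) (hPw : ⟪P, w - P⟫ = 0)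
    (hdist : dist u P ≤ ε) (horient : 0 ≤ ⟪u, cross3 v w⟫) :
    Real.sqrt (1 - ε ^ 2) * ‖cross3 (v - u) (w - u)‖ ≤ ⟪u, cross3 v w⟫ := by
  have hheight := sqrt_one_sub_sq_le_norm_of_inner_sub_eq_zero hu hPu hdist
  have hε0 : 0 ≤ ε := dist_nonneg.trans hdist
  have hP : P ≠ 0 := norm_pos_iff.mp ((Real.sqrt_pos.mpr (by nlinarith)).trans_le hheight)
  rw [inner_cross3_eq_norm_mul_norm_cross3_sub_sub hP hPu hPv hPw horient]
  exact mul_le_mul_of_nonneg_right hheight (norm_nonneg _)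

lemma sum_mul_sum_sq_div_eq_sq_sum_of_proportional {ι K : Type*} [Field K] (s : Finset ι)
    {a m : ι → K} {c : K} (hm : ∀ i ∈ s, m i ≠ 0) (ha : ∀ i ∈ s, a i = c * m i) :
    (∑ i ∈ s, m i) * ∑ i ∈ s, a i ^ 2 / m i = (∑ i ∈ s, a i) ^ 2 := by
  have hE : ∑ i ∈ s, a i ^ 2 / m i = c ^ 2 * ∑ i ∈ s, m i := by
    rw [mul_sum]
    refine sum_congr rfl fun i hi => ?_
    rw [ha i hi]
    field_simp [hm i hi]
  rw [hE, sum_congr rfl ha, ← mul_sum]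
  ring

lemma sq_div_sub_self_nonneg_and_le {A T k : ℝ} (hT : 0 < T) (hkA : k * A ≤ T) (hTA : T ≤ A) :
    0 ≤ A ^ 2 / T - T ∧ A ^ 2 / T - T ≤ (1 + A / T) * A * (1 - k) := by
  have hfactor : A ^ 2 / T - T = (A - T) * (1 + A / T) := by
    field_simp
    ring
  have hfac_nonneg : 0 ≤ 1 + A / T := by
    have : 0 ≤ A / T := div_nonneg (by linarith) hT.le
    linarith
  rw [hfactor]
  refine ⟨mul_nonneg (by linarith) hfac_nonneg, ?_⟩
  calc (A - T) * (1 + A / T) ≤ (A - k * A) * (1 + A / T) := by gcongr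
    _ = (1 + A / T) * A * (1 - k) := by ring

theorem spherical_authalic_energy_bound_area_preserving_general {ι : Type*} [Fintype ι] [Nonempty ι]
    (ε : ℝ) (hε1 : ε < 1)
    (u v w P : ι → EuclideanSpace ℝ (Fin 3))
    (hu : ∀ s, ‖u s‖ = 1)
    (horient : ∀ s, 0 < ⟪u s, cross3 (v s) (w s)⟫)
    (hPorth : ∀ s, ∀ q ∈ affineSpan ℝ {u s, v s, w s},
      ⟪(0 : EuclideanSpace ℝ (Fin 3)) - P s, q - P s⟫ = 0)
    (hPu : ∀ s, dist (u s) (P s) ≤ ε)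
    (m : ι → ℝ) (hm : ∀ s, 0 < m s)
    (c : ℝ)
    (hareap : ∀ s, ‖cross3 (v s - u s) (w s - u s)‖ / 2 = c * m s)
    (a : ι → ℝ) (A V M E : ℝ)
    (ha : ∀ s, a s = ‖cross3 (v s - u s) (w s - u s)‖ / 2)
    (hA : A = ∑ s, a s)
    (hV : V = ∑ s, ⟪u s, cross3 (v s) (w s)⟫ / 6)
    (hM : M = ∑ s, m s)
    (hE : E = ∑ s, a s ^ 2 / m s) :
    0 ≤ M * E / (3 * V) - 3 * V ∧
      M * E / (3 * V) - 3 * V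
        ≤ (1 + A / (3 * V)) * A * (1 - Real.sqrt (1 - ε ^ 2)) := by
  have horth : ∀ s, ∀ q ∈ ({u s, v s, w s} : Set _), ⟪P s, q - P s⟫ = 0 := fun s q hq => by
    simpa using hPorth s q (subset_affineSpan ℝ _ hq)
  have h3V : 3 * V = ∑ s, ⟪u s, cross3 (v s) (w s)⟫ / 2 := by
    rw [hV, mul_sum]
    exact sum_congr rfl fun s _ => by ring
  have hpos : 0 < 3 * V := h3V ▸ sum_pos (fun s _ => half_pos (horient s)) univ_nonempty
  have hlower : Real.sqrt (1 - ε ^ 2) * A ≤ 3 * V := by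
    rw [h3V, hA, mul_sum]
    gcongr with s
    rw [ha s, ← mul_div_assoc]
    gcongr
    exact sqrt_one_sub_sq_mul_norm_cross3_le_inner_cross3 hε1 (hu s) (horth s _ (by simp))
      (horth s _ (by simp)) (horth s _ (by simp)) (hPu s) (horient s).le
  have hupper : 3 * V ≤ A := by
    rw [h3V, hA]
    gcongr with s
    rw [ha s]
    gcongr
    exact inner_cross3_le_norm_cross3_sub_sub (hu s) (v s) (w s)
  have hME : M * E = A ^ 2 := by
    rw [hM, hE, hA]
    exact sum_mul_sum_sq_div_eq_sq_sum_of_proportional _ (fun s _ => (hm s).ne')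
      fun s _ => (ha s).trans (hareap s)
  rw [hME]
  exact sq_div_sub_self_nonneg_and_le hpos hlower hupper

/-- The second assertion of Theorem 3.1 stated concretely in `ℝ³`: for positively oriented
triangles `[u_s, v_s, w_s]` with unit-vector vertices and circumradius at most `ε < 1`,
domain face areas `m_s > 0`, and an area-preserving map (`a_s = c·m_s` for a constant `c > 0`,
where `a_s = ‖(v_s − u_s) × (w_s − u_s)‖/2`), the spherical authalic energy
`M·E/(3V) − 3V` satisfies `0 ≤ M·E/(3V) − 3V ≤ (1 + A/(3V)) · A · (1 − √(1 − ε²))`. -/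
theorem spherical_authalic_energy_bound_area_preserving {ι : Type*} [Fintype ι] [Nonempty ι]
    (ε : ℝ) (hε0 : 0 ≤ ε) (hε1 : ε < 1)
    (u v w P : ι → EuclideanSpace ℝ (Fin 3))
    (hind : ∀ s, AffineIndependent ℝ ![u s, v s, w s])
    (hu : ∀ s, ‖u s‖ = 1) (hv : ∀ s, ‖v s‖ = 1) (hw : ∀ s, ‖w s‖ = 1)
    (horient : ∀ s, 0 < ⟪u s, cross3 (v s) (w s)⟫)
    (hPmem : ∀ s, P s ∈ affineSpan ℝ {u s, v s, w s})
    (hPorth : ∀ s, ∀ q ∈ affineSpan ℝ {u s, v s, w s},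
      ⟪(0 : EuclideanSpace ℝ (Fin 3)) - P s, q - P s⟫ = 0)
    (hPu : ∀ s, dist (u s) (P s) ≤ ε) (hPv : ∀ s, dist (v s) (P s) ≤ ε)
    (hPw : ∀ s, dist (w s) (P s) ≤ ε)
    (m : ι → ℝ) (hm : ∀ s, 0 < m s)
    (c : ℝ) (hc : 0 < c)
    (hareap : ∀ s, ‖cross3 (v s - u s) (w s - u s)‖ / 2 = c * m s)
    (a : ι → ℝ) (A V M E : ℝ)
    (ha : ∀ s, a s = ‖cross3 (v s - u s) (w s - u s)‖ / 2)
    (hA : A = ∑ s, a s)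
    (hV : V = ∑ s, ⟪u s, cross3 (v s) (w s)⟫ / 6)
    (hM : M = ∑ s, m s)
    (hE : E = ∑ s, a s ^ 2 / m s) :
    0 ≤ M * E / (3 * V) - 3 * V ∧
      M * E / (3 * V) - 3 * V
        ≤ (1 + A / (3 * V)) * A * (1 - Real.sqrt (1 - ε ^ 2)) :=
  spherical_authalic_energy_bound_area_preserving_general ε hε1 u v w P hu horient hPorth hPu m hm c
    hareap a A V M E ha hA hV hM hE
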